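/- arXiv:2510.09814 — 6 statements merged into one kernel-verified Lean document; each statement's English description precedes it below -/
import Mathlib

section
/- In any assignment game, if (μ, p) is a stable allocation, then μ is an optimal matching, i.e., SW(μ) = OPT. -/
open Finset

/-- A matching: a partial, injective assignment of buyers to sellers. -/
structure Matching (B S : Type*) where
  toFun : B → Option S
  inj : ∀ i i' j, toFun i = some j → toFun i' = some j → i = i'

variable {B S : Type*} [Fintype B] [Fintype S]

/-- Generated utility of a pair: `a i j = h i j - c j`. -/
def gain (h : B → S → ℝ) (c : S → ℝ) (i : B) (j : S) : ℝ := h i j - c j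

/-- Social welfare of a matching. -/
def SW (h : B → S → ℝ) (c : S → ℝ) (μ : Matching B S) : ℝ :=
  ∑ i : B, ((μ.toFun i).elim 0 (fun j => gain h c i j))

/-- Buyer utility under an allocation. -/
def buyerU (h : B → S → ℝ) (μ : Matching B S) (p : S → ℝ) (i : B) : ℝ :=
  (μ.toFun i).elim 0 (fun j => h i j - p j)

/-- Seller utility under an allocation. -/
def sellerU (c : S → ℝ) (p : S → ℝ) (j : S) : ℝ := p j - c j

/-- A seller is matched under `μ`. -/
def SellerMatched (μ : Matching B S) (j : S) : Prop := ∃ i, μ.toFun i = some j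

/-- A valid price vector: nonnegative, and equal to the seller's valuation on
unmatched sellers. -/
def ValidPrices (c : S → ℝ) (μ : Matching B S) (p : S → ℝ) : Prop :=
  (∀ j, 0 ≤ p j) ∧ (∀ j, ¬ SellerMatched μ j → p j = c j)

/-- Individual rationality of an allocation. -/
def IndivRational (h : B → S → ℝ) (c : S → ℝ) (μ : Matching B S) (p : S → ℝ) : Prop :=
  (∀ i, 0 ≤ buyerU h μ p i) ∧ (∀ j, 0 ≤ sellerU c p j)

/-- Stability of an allocation. -/
def Stable (h : B → S → ℝ) (c : S → ℝ) (μ : Matching B S) (p : S → ℝ) : Prop :=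
  IndivRational h c μ p ∧ ∀ i j, gain h c i j ≤ buyerU h μ p i + sellerU c p j

/-- The optimal (maximum) social welfare over all matchings. -/
noncomputable def OPT (h : B → S → ℝ) (c : S → ℝ) : ℝ :=
  sSup (Set.range (SW h c))

/-- `μ'` is a matching within the sub-market `(B', S')`. -/
def Within (B' : Finset B) (S' : Finset S) (μ' : Matching B S) : Prop :=
  ∀ i j, μ'.toFun i = some j → i ∈ B' ∧ j ∈ S'

/-- Subset instability of a pair of utility vectors `(u, v)`. -/
noncomputable def SIgen (h : B → S → ℝ) (c : S → ℝ) (u : B → ℝ) (v : S → ℝ) : ℝ :=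
  sSup {x | ∃ (B' : Finset B) (S' : Finset S) (μ' : Matching B S),
    Within B' S' μ' ∧ x = SW h c μ' - ((∑ i ∈ B', u i) + (∑ j ∈ S', v j))}

/-- Subset instability of an allocation. -/
noncomputable def SI (h : B → S → ℝ) (c : S → ℝ) (μ : Matching B S) (p : S → ℝ) : ℝ :=
  SIgen h c (buyerU h μ p) (sellerU c p)

/-! The stability inequalities `u i + v j ≥ a i j`, summed over the pairs of an arbitrary
matching `μ'` (with `u, v ≥ 0` for the agents `μ'` leaves single), give `SW μ' ≤ ∑ u + ∑ v`.
Since prices are only transfers between partners of `μ`, `∑ u + ∑ v = SW μ`. -/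

section

open scoped Classical

variable {M : Type*} [AddCommMonoid M]

theorem Option.elim_zero_eq_sum_ite (x : Option S) (f : S → M) :
    x.elim 0 f = ∑ j, if x = some j then f j else 0 := by
  cases x <;> simp

theorem Matching.sum_elim_eq_sum_sellerMatched (μ : Matching B S) (f : S → M) :
    ∑ i, (μ.toFun i).elim 0 f = ∑ j, if SellerMatched μ j then f j else 0 := by
  simp_rw [Option.elim_zero_eq_sum_ite]
  rw [Finset.sum_comm]
  refine Finset.sum_congr rfl fun j _ => ?_
  by_cases hj : SellerMatched μ j
  · obtain ⟨i₀, hi₀⟩ := hj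
    rw [if_pos ⟨i₀, hi₀⟩, Finset.sum_eq_single i₀ _ (by simp), if_pos hi₀]
    intro i _ hne
    exact if_neg fun hi => hne (μ.inj i i₀ j hi hi₀)
  · rw [if_neg hj]
    exact Finset.sum_eq_zero fun i _ => if_neg fun hi => hj ⟨i, hi⟩

end

theorem sum_buyerU_add_sum_sellerU (h : B → S → ℝ) (c : S → ℝ) (μ : Matching B S)
    (p : S → ℝ) (hp : ValidPrices c μ p) :
    ∑ i, buyerU h μ p i + ∑ j, sellerU c p j = SW h c μ := by
  classical
  have hsellers : ∑ j, sellerU c p j = ∑ i, (μ.toFun i).elim 0 (sellerU c p) := by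
    rw [μ.sum_elim_eq_sum_sellerMatched]
    refine Finset.sum_congr rfl fun j _ => ?_
    split_ifs with hj
    · rfl
    · simp [sellerU, hp.2 j hj]
  rw [hsellers, SW, ← Finset.sum_add_distrib]
  refine Finset.sum_congr rfl fun i _ => ?_
  cases hi : μ.toFun i with
  | none => simp [buyerU, hi]
  | some j => simp [buyerU, sellerU, gain, hi]

theorem SW_le_sum_buyerU_add_sum_sellerU (h : B → S → ℝ) (c : S → ℝ) (μ : Matching B S)
    (p : S → ℝ) (hstable : Stable h c μ p) (μ' : Matching B S) :
    SW h c μ' ≤ ∑ i, buyerU h μ p i + ∑ j, sellerU c p j := by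
  classical
  obtain ⟨⟨hbuyer, hseller⟩, hpair⟩ := hstable
  calc SW h c μ'
      ≤ ∑ i, (buyerU h μ p i + (μ'.toFun i).elim 0 (sellerU c p)) := by
        refine Finset.sum_le_sum fun i _ => ?_
        cases μ'.toFun i with
        | none => simpa using hbuyer i
        | some j => simpa using hpair i j
    _ = ∑ i, buyerU h μ p i + ∑ j, if SellerMatched μ' j then sellerU c p j else 0 := by
        rw [Finset.sum_add_distrib, μ'.sum_elim_eq_sum_sellerMatched]
    _ ≤ ∑ i, buyerU h μ p i + ∑ j, sellerU c p j := by
        gcongr with j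
        split_ifs
        exacts [le_rfl, hseller j]

theorem stable_implies_optimal_general
    {B S : Type*} [Fintype B] [Fintype S]
    (h : B → S → ℝ) (c : S → ℝ)
    (μ : Matching B S) (p : S → ℝ)
    (hp : ValidPrices c μ p) (hstable : Stable h c μ p) :
    SW h c μ = OPT h c := by
  have hmax : IsGreatest (Set.range (SW h c)) (SW h c μ) := by
    refine ⟨⟨μ, rfl⟩, ?_⟩
    rintro _ ⟨μ', rfl⟩
    calc SW h c μ' ≤ ∑ i, buyerU h μ p i + ∑ j, sellerU c p j :=
          SW_le_sum_buyerU_add_sum_sellerU h c μ p hstable μ'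
      _ = SW h c μ := sum_buyerU_add_sum_sellerU h c μ p hp
  exact hmax.csSup_eq.symm

/-- Shapley–Shubik: a stable allocation is built on an optimal matching. -/
theorem stable_implies_optimal
    {B S : Type*} [Fintype B] [Fintype S]
    (h : B → S → ℝ) (c : S → ℝ)
    (hh : ∀ i j, 0 ≤ h i j) (hc : ∀ j, 0 ≤ c j)
    (ha : ∀ i j, 0 ≤ gain h c i j)
    (μ : Matching B S) (p : S → ℝ)
    (hp : ValidPrices c μ p) (hstable : Stable h c μ p) :
    SW h c μ = OPT h c :=
  stable_implies_optimal_general h c μ p hp hstable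
end

section
/- Every assignment game (with nonnegative generated utilities) admits a stable allocation (μ, p); in particular, by the converse direction, its matching μ is an optimal matching. -/
open Finset

variable {B S : Type*} [Fintype B] [Fintype S]

/-!
Prices `p ≥ c` minimising the dual objective `∑ i, max (0, max j (h i j - p j)) + ∑ j, (p j - c j)`
exist by compactness. At such prices the graph of tight buyer–seller pairs satisfies Hall's
condition both for the buyers with positive utility and for the sellers priced above cost, since
a small shift of the relevant prices would otherwise decrease the objective. Merging the two Hall
matchings à la Mendelsohn–Dulmage yields a competitive equilibrium. It is stable, and its welfare
equals the dual objective, which bounds the welfare of every matching.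
-/

open Finset Function Filter Topology

lemma Real.eventually_le_of_pos (x : ℝ) : ∀ᶠ ε in 𝓝[>] (0 : ℝ), 0 < x → ε ≤ x := by
  by_cases hx : 0 < x
  · filter_upwards [nhdsWithin_le_nhds (eventually_le_nhds hx)] with ε hε _ using hε
  · exact .of_forall fun _ h => absurd h hx

namespace Matching

variable {B S : Type*}

noncomputable def ofPairs {T : Type*} (a : T → B) (b : T → S) (ha : Injective a)
    (hb : Injective b) : Matching B S where
  toFun i := (partialInv a i).map b
  inj i i' j hi hi' := by
    obtain ⟨t, ht, rfl⟩ := Option.map_eq_some_iff.1 hi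
    obtain ⟨t', ht', htt'⟩ := Option.map_eq_some_iff.1 hi'
    rw [← ha.isPartialInv _ _ |>.1 ht, ← ha.isPartialInv _ _ |>.1 ht', hb htt']

lemma ofPairs_apply_eq_some_iff {T : Type*} {a : T → B} {b : T → S} {ha : Injective a}
    {hb : Injective b} {i : B} {j : S} :
    (ofPairs a b ha hb).toFun i = some j ↔ ∃ t, a t = i ∧ b t = j := by
  simp only [ofPairs, Option.map_eq_some_iff]
  exact exists_congr fun t => and_congr_left' (ha.isPartialInv t i)

/-- Buyers reached by an alternating path that starts at a seller matched by `μ₂` but not by `μ₁`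
and then alternates between `μ₂`-edges and `μ₁`-edges. -/
inductive AltReach (μ₁ μ₂ : Matching B S) : B → Prop
  | start {i j} : μ₂.toFun i = some j → (∀ i', μ₁.toFun i' ≠ some j) → AltReach μ₁ μ₂ i
  | step {i₁ i₂ j} : AltReach μ₁ μ₂ i₁ → μ₁.toFun i₁ = some j → μ₂.toFun i₂ = some j →
      AltReach μ₁ μ₂ i₂

lemma AltReach.isSome {μ₁ μ₂ : Matching B S} {i : B} (hi : AltReach μ₁ μ₂ i) :
    (μ₂.toFun i).isSome := by
  cases hi with
  | start h₂ _ => exact Option.isSome_of_eq_some h₂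
  | step _ _ h₂ => exact Option.isSome_of_eq_some h₂

lemma AltReach.of_left {μ₁ μ₂ : Matching B S} {i i' : B} {j : S} (hi : AltReach μ₁ μ₂ i)
    (h₂ : μ₂.toFun i = some j) (h₁ : μ₁.toFun i' = some j) : AltReach μ₁ μ₂ i' := by
  cases hi with
  | start h₂' hfree => cases h₂.symm.trans h₂'; exact absurd h₁ (hfree i')
  | step hr h₁' h₂' => cases h₂.symm.trans h₂'; exact μ₁.inj _ _ _ h₁' h₁ ▸ hr

open Classical in
/-- The Mendelsohn–Dulmage merge of two matchings. -/
noncomputable def merge (μ₁ μ₂ : Matching B S) : Matching B S where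
  toFun i := if AltReach μ₁ μ₂ i then μ₂.toFun i else μ₁.toFun i
  inj i i' j hi hi' := by
    split_ifs at hi hi' with hr hr' hr'
    · exact μ₂.inj i i' j hi hi'
    · exact absurd (hr.of_left hi hi') hr'
    · exact absurd (hr'.of_left hi' hi) hr
    · exact μ₁.inj i i' j hi hi'

open Classical in
lemma merge_apply (μ₁ μ₂ : Matching B S) (i : B) :
    (merge μ₁ μ₂).toFun i = if AltReach μ₁ μ₂ i then μ₂.toFun i else μ₁.toFun i :=
  rfl

lemma merge_apply_eq_or (μ₁ μ₂ : Matching B S) (i : B) :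
    (merge μ₁ μ₂).toFun i = μ₁.toFun i ∨ (merge μ₁ μ₂).toFun i = μ₂.toFun i := by
  rw [merge_apply]
  split_ifs <;> simp

lemma isSome_merge {μ₁ μ₂ : Matching B S} {i : B} (hi : (μ₁.toFun i).isSome) :
    ((merge μ₁ μ₂).toFun i).isSome := by
  rw [merge_apply]
  split_ifs with hr
  · exact hr.isSome
  · exact hi

lemma sellerMatched_merge {μ₁ μ₂ : Matching B S} {j : S} (hj : SellerMatched μ₂ j) :
    SellerMatched (merge μ₁ μ₂) j := by
  obtain ⟨i₂, hi₂⟩ := hj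
  by_cases hr₂ : AltReach μ₁ μ₂ i₂
  · exact ⟨i₂, by rw [merge_apply, if_pos hr₂, hi₂]⟩
  obtain ⟨i₁, hi₁⟩ : ∃ i₁, μ₁.toFun i₁ = some j := by
    by_contra! hfree
    exact hr₂ (.start hi₂ hfree)
  have hr₁ : ¬ AltReach μ₁ μ₂ i₁ := fun hr₁ => hr₂ (hr₁.step hi₁ hi₂)
  exact ⟨i₁, by rw [merge_apply, if_neg hr₁, hi₁]⟩

open Classical in
lemma exists_isSome_of_hall [Fintype S] (r : B → S → Prop) (P : B → Prop)
    (hall : ∀ X : Finset B, (∀ i ∈ X, P i) → #X ≤ #{j | ∃ i ∈ X, r i j}) :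
    ∃ μ : Matching B S, (∀ i j, μ.toFun i = some j → r i j) ∧ ∀ i, P i → (μ.toFun i).isSome := by
  obtain ⟨f, hf, hfr⟩ := (Fintype.all_card_le_filter_rel_iff_exists_injective
    (fun (i : Subtype P) j => r i j)).1 fun A => by
      simpa using hall (A.map (Embedding.subtype P)) fun i hi => by
        obtain ⟨t, -, rfl⟩ := mem_map.1 hi
        exact t.2
  refine ⟨ofPairs Subtype.val f Subtype.val_injective hf, ?_, fun i hi => ?_⟩
  · rintro i j hij
    obtain ⟨t, rfl, rfl⟩ := ofPairs_apply_eq_some_iff.1 hij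
    exact hfr t
  · exact Option.isSome_of_eq_some (ofPairs_apply_eq_some_iff.2 ⟨⟨i, hi⟩, rfl, rfl⟩)

open Classical in
lemma exists_sellerMatched_of_hall [Fintype B] (r : B → S → Prop) (Q : S → Prop)
    (hall : ∀ Y : Finset S, (∀ j ∈ Y, Q j) → #Y ≤ #{i | ∃ j ∈ Y, r i j}) :
    ∃ μ : Matching B S, (∀ i j, μ.toFun i = some j → r i j) ∧ ∀ j, Q j → SellerMatched μ j := by
  obtain ⟨f, hf, hfr⟩ := (Fintype.all_card_le_filter_rel_iff_exists_injective
    (fun (j : Subtype Q) i => r i j)).1 fun A => by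
      simpa using hall (A.map (Embedding.subtype Q)) fun j hj => by
        obtain ⟨t, -, rfl⟩ := mem_map.1 hj
        exact t.2
  refine ⟨ofPairs f Subtype.val hf Subtype.val_injective, ?_, fun j hj => ?_⟩
  · rintro i j hij
    obtain ⟨t, rfl, rfl⟩ := ofPairs_apply_eq_some_iff.1 hij
    exact hfr t
  · exact ⟨f ⟨j, hj⟩, ofPairs_apply_eq_some_iff.2 ⟨⟨j, hj⟩, rfl, rfl⟩⟩

open Classical in
lemma sum_elim_toFun [Fintype B] [Fintype S] (ν : Matching B S) (w : S → ℝ) :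
    ∑ i, (ν.toFun i).elim 0 w = ∑ j with SellerMatched ν j, w j := by
  have hrow : ∀ i, (ν.toFun i).elim 0 w = ∑ j, if ν.toFun i = some j then w j else 0 := by
    intro i
    cases ν.toFun i <;> simp
  have hcol : ∀ j, ∑ i, (if ν.toFun i = some j then w j else 0) =
      if SellerMatched ν j then w j else 0 := by
    intro j
    split_ifs with hj
    · obtain ⟨i₀, hi₀⟩ := hj
      rw [Fintype.sum_eq_single i₀ fun i hi => if_neg fun hij => hi (ν.inj i i₀ j hij hi₀),
        if_pos hi₀]
    · exact sum_eq_zero fun i _ => if_neg fun hij => hj ⟨i, hij⟩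
  simp_rw [hrow]
  rw [sum_comm, sum_filter]
  exact sum_congr rfl fun j _ => hcol j

end Matching

namespace AssignmentGame

section Payoff

variable {B S : Type*}

/-- The option `none` is staying out of the market. -/
def payoff (h : B → S → ℝ) (p : S → ℝ) (i : B) (o : Option S) : ℝ :=
  o.elim 0 fun j => h i j - p j

def shiftOn [DecidableEq S] (p : S → ℝ) (Y : Finset S) (t : ℝ) : S → ℝ :=
  fun j => p j + if j ∈ Y then t else 0

lemma payoff_shiftOn_some [DecidableEq S] (h : B → S → ℝ) (p : S → ℝ) (Y : Finset S) (t : ℝ)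
    (i : B) (j : S) :
    payoff h (shiftOn p Y t) i (some j) = payoff h p i (some j) - if j ∈ Y then t else 0 := by
  simp only [payoff, shiftOn, Option.elim_some]
  ring

lemma payoff_shiftOn_le [DecidableEq S] {h : B → S → ℝ} {p : S → ℝ} (Y : Finset S) {t : ℝ}
    (ht : 0 ≤ t) (i : B) (o : Option S) : payoff h (shiftOn p Y t) i o ≤ payoff h p i o := by
  cases o with
  | none => exact le_rfl
  | some j =>
    rw [payoff_shiftOn_some]
    split_ifs <;> linarith

end Payoff

variable {B S : Type*} [Fintype S]

noncomputable def indirectUtility (h : B → S → ℝ) (p : S → ℝ) (i : B) : ℝ :=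
  univ.sup' univ_nonempty (payoff h p i)

lemma payoff_le_indirectUtility (h : B → S → ℝ) (p : S → ℝ) (i : B) (o : Option S) :
    payoff h p i o ≤ indirectUtility h p i :=
  le_sup' _ (mem_univ o)

lemma sub_le_indirectUtility (h : B → S → ℝ) (p : S → ℝ) (i : B) (j : S) :
    h i j - p j ≤ indirectUtility h p i :=
  payoff_le_indirectUtility h p i (some j)

lemma indirectUtility_nonneg (h : B → S → ℝ) (p : S → ℝ) (i : B) : 0 ≤ indirectUtility h p i :=
  payoff_le_indirectUtility h p i none

lemma indirectUtility_le {h : B → S → ℝ} {p : S → ℝ} {i : B} {a : ℝ}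
    (ha : ∀ o, payoff h p i o ≤ a) : indirectUtility h p i ≤ a :=
  sup'_le _ _ fun o _ => ha o

lemma continuous_indirectUtility (h : B → S → ℝ) (i : B) :
    Continuous fun p => indirectUtility h p i :=
  Continuous.finset_sup'_apply _ fun o _ => by
    cases o
    · exact continuous_const
    · exact continuous_const.sub (continuous_apply _)

def Demands (h : B → S → ℝ) (p : S → ℝ) (i : B) (o : Option S) : Prop :=
  payoff h p i o = indirectUtility h p i

structure IsCompetitiveEquilibrium (h : B → S → ℝ) (c : S → ℝ) (μ : Matching B S)
    (p : S → ℝ) : Prop where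
  cost_le_price : c ≤ p
  demands : ∀ i, Demands h p i (μ.toFun i)
  price_eq_cost : ∀ j, ¬ SellerMatched μ j → p j = c j

namespace IsCompetitiveEquilibrium

variable {h : B → S → ℝ} {c : S → ℝ} {μ : Matching B S} {p : S → ℝ}

lemma buyerU_eq (he : IsCompetitiveEquilibrium h c μ p) (i : B) :
    buyerU h μ p i = indirectUtility h p i :=
  he.demands i

lemma validPrices (he : IsCompetitiveEquilibrium h c μ p) (hc : ∀ j, 0 ≤ c j) :
    ValidPrices c μ p :=
  ⟨fun j => (hc j).trans (he.cost_le_price j), he.price_eq_cost⟩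

lemma stable (he : IsCompetitiveEquilibrium h c μ p) : Stable h c μ p := by
  refine ⟨⟨fun i => ?_, fun j => sub_nonneg.2 (he.cost_le_price j)⟩, fun i j => ?_⟩
  · rw [he.buyerU_eq]
    exact indirectUtility_nonneg h p i
  · rw [he.buyerU_eq, gain, sellerU]
    linarith [sub_le_indirectUtility h p i j]

end IsCompetitiveEquilibrium

variable [Fintype B]

/-- The objective of the dual linear program of the assignment game. -/
noncomputable def dualValue (h : B → S → ℝ) (c p : S → ℝ) : ℝ :=
  ∑ i, indirectUtility h p i + ∑ j, sellerU c p j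

lemma continuous_dualValue (h : B → S → ℝ) (c : S → ℝ) : Continuous (dualValue h c) :=
  (continuous_finsetSum _ fun i _ => continuous_indirectUtility h i).add
    (continuous_finsetSum _ fun j _ => (continuous_apply j).sub continuous_const)

open Classical in
lemma SW_eq_sum_buyerU_add_sum_sellerU (h : B → S → ℝ) (c : S → ℝ) (ν : Matching B S)
    (p : S → ℝ) :
    SW h c ν = ∑ i, buyerU h ν p i + ∑ j with SellerMatched ν j, sellerU c p j := by
  rw [← Matching.sum_elim_toFun, ← sum_add_distrib, SW]
  refine sum_congr rfl fun i _ => ?_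
  cases hν : ν.toFun i <;> simp [buyerU, sellerU, gain, hν]

lemma SW_le_dualValue {h : B → S → ℝ} {c p : S → ℝ} (hcp : c ≤ p) (ν : Matching B S) :
    SW h c ν ≤ dualValue h c p := by
  classical
  rw [SW_eq_sum_buyerU_add_sum_sellerU h c ν p, dualValue]
  exact add_le_add (sum_le_sum fun i _ => payoff_le_indirectUtility h p i _)
    (sum_le_sum_of_subset_of_nonneg (filter_subset _ _) fun j _ _ => sub_nonneg.2 (hcp j))

namespace IsCompetitiveEquilibrium

variable {h : B → S → ℝ} {c : S → ℝ} {μ : Matching B S} {p : S → ℝ}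

lemma SW_eq_dualValue (he : IsCompetitiveEquilibrium h c μ p) : SW h c μ = dualValue h c p := by
  classical
  rw [SW_eq_sum_buyerU_add_sum_sellerU h c μ p, dualValue, sum_filter_of_ne fun j _ hj => ?_]
  · simp only [he.buyerU_eq]
  · by_contra hfree
    exact hj (sub_eq_zero.2 (he.price_eq_cost j hfree))

lemma SW_eq_OPT (he : IsCompetitiveEquilibrium h c μ p) : SW h c μ = OPT h c := by
  refine (IsGreatest.csSup_eq (s := Set.range (SW h c)) ⟨⟨μ, rfl⟩, ?_⟩).symm
  rintro _ ⟨ν, rfl⟩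
  exact (SW_le_dualValue he.cost_le_price ν).trans he.SW_eq_dualValue.ge

end IsCompetitiveEquilibrium

lemma dualValue_inf_le {h : B → S → ℝ} {q : S → ℝ} (hq : ∀ i j, h i j ≤ q j) (c p : S → ℝ) :
    dualValue h c (p ⊓ q) ≤ dualValue h c p := by
  refine add_le_add (sum_le_sum fun i _ => indirectUtility_le fun o => ?_)
    (sum_le_sum fun j _ => sub_le_sub_right inf_le_left _)
  cases o with
  | none => exact indirectUtility_nonneg h p i
  | some j =>
    simp only [payoff, Option.elim_some, Pi.inf_apply]
    rcases le_total (p j) (q j) with hpq | hqp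
    · rw [inf_eq_left.2 hpq]
      exact sub_le_indirectUtility h p i j
    · rw [inf_eq_right.2 hqp]
      linarith [hq i j, indirectUtility_nonneg h p i]

/-- Capping prices at the highest valuation can only lower `dualValue`, so a minimiser over a
compact box is a minimiser over all prices above the costs. -/
lemma exists_forall_dualValue_le (h : B → S → ℝ) (c : S → ℝ) :
    ∃ p, c ≤ p ∧ ∀ p', c ≤ p' → dualValue h c p ≤ dualValue h c p' := by
  set q : S → ℝ := fun j => max (c j) (⨆ i, h i j)
  have hhq : ∀ i j, h i j ≤ q j := fun i j =>
    (le_ciSup (Finite.bddAbove_range fun i => h i j) i).trans (le_max_right _ _)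
  have hcq : c ≤ q := fun j => le_max_left _ _
  obtain ⟨p, ⟨hcp, -⟩, hp⟩ := isCompact_Icc.exists_isMinOn ⟨c, Set.left_mem_Icc.2 hcq⟩
    (continuous_dualValue h c).continuousOn
  exact ⟨p, hcp, fun p' hcp' =>
    (hp ⟨le_inf hcp' hcq, inf_le_right⟩).trans (dualValue_inf_le hhq c p')⟩

lemma dualValue_shiftOn_le [DecidableEq B] [DecidableEq S] {h : B → S → ℝ} {c p : S → ℝ}
    (Y : Finset S) (Z : Finset B) (t : ℝ)
    (hZ : ∀ i, indirectUtility h (shiftOn p Y t) i ≤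
      indirectUtility h p i - if i ∈ Z then t else 0) :
    dualValue h c (shiftOn p Y t) ≤ dualValue h c p + t * (#Y - #Z) := by
  have hbuyers : ∑ i, indirectUtility h (shiftOn p Y t) i ≤ ∑ i, indirectUtility h p i - #Z * t :=
    calc ∑ i, indirectUtility h (shiftOn p Y t) i
        ≤ ∑ i, (indirectUtility h p i - if i ∈ Z then t else 0) := sum_le_sum fun i _ => hZ i
      _ = ∑ i, indirectUtility h p i - #Z * t := by
        rw [sum_sub_distrib, Fintype.sum_ite_mem, sum_const, nsmul_eq_mul]
  have hsellers : ∑ j, sellerU c (shiftOn p Y t) j = ∑ j, sellerU c p j + #Y * t := by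
    simp only [sellerU, shiftOn, add_sub_right_comm _ _ (c _), sum_add_distrib, Fintype.sum_ite_mem,
      sum_const, nsmul_eq_mul]
  rw [dualValue, dualValue, hsellers]
  linarith

lemma eventually_forall_le_sub_payoff (h : B → S → ℝ) (p : S → ℝ) :
    ∀ᶠ ε in 𝓝[>] (0 : ℝ), ∀ i o, ¬ Demands h p i o →
      ε ≤ indirectUtility h p i - payoff h p i o := by
  filter_upwards [eventually_all.2 fun i => eventually_all.2 fun o =>
    Real.eventually_le_of_pos (indirectUtility h p i - payoff h p i o)] with ε hε i o ho
  exact hε i o (sub_pos.2 ((payoff_le_indirectUtility h p i o).lt_of_ne ho))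

open Classical in
/-- Otherwise raising the prices of the sellers they demand would lower `dualValue`. -/
lemma card_le_card_demanded {h : B → S → ℝ} {c p : S → ℝ}
    (hmin : ∀ p', c ≤ p' → dualValue h c p ≤ dualValue h c p') (hcp : c ≤ p)
    (X : Finset B) (hX : ∀ i ∈ X, 0 < indirectUtility h p i) :
    #X ≤ #{j | ∃ i ∈ X, Demands h p i (some j)} := by
  set Y : Finset S := {j | ∃ i ∈ X, Demands h p i (some j)}
  obtain ⟨ε, hgap, hε : 0 < ε⟩ :=
    ((eventually_forall_le_sub_payoff h p).and self_mem_nhdsWithin).exists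
  have hZ : ∀ i, indirectUtility h (shiftOn p Y ε) i ≤
      indirectUtility h p i - if i ∈ X then ε else 0 := by
    intro i
    refine indirectUtility_le fun o => ?_
    have hle := payoff_le_indirectUtility h p i o
    have hshift := payoff_shiftOn_le (h := h) (p := p) Y hε.le i o
    by_cases hiX : i ∈ X
    · rw [if_pos hiX]
      by_cases hio : Demands h p i o
      · cases o with
        | none => exact absurd hio (hX i hiX).ne
        | some j =>
          have hjY : j ∈ Y := mem_filter.2 ⟨mem_univ j, i, hiX, hio⟩
          rw [payoff_shiftOn_some, if_pos hjY, hio]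
      · linarith [hgap i o hio]
    · rw [if_neg hiX]
      linarith
  have hshift := dualValue_shiftOn_le (c := c) Y X ε hZ
  have hmin' := hmin (shiftOn p Y ε) fun j =>
    (hcp j).trans (le_add_of_nonneg_right (by split_ifs <;> linarith))
  have : (0 : ℝ) ≤ #Y - #X := (mul_nonneg_iff_of_pos_left hε).1 (by linarith)
  exact_mod_cast sub_nonneg.1 this

open Classical in
/-- Otherwise lowering their prices would lower `dualValue`. -/
lemma card_le_card_demanders {h : B → S → ℝ} {c p : S → ℝ}
    (hmin : ∀ p', c ≤ p' → dualValue h c p ≤ dualValue h c p') (hcp : c ≤ p)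
    (Y : Finset S) (hY : ∀ j ∈ Y, c j < p j) :
    #Y ≤ #{i | ∃ j ∈ Y, Demands h p i (some j)} := by
  set N : Finset B := {i | ∃ j ∈ Y, Demands h p i (some j)}
  obtain ⟨ε, ⟨hgap, hεY⟩, hε : 0 < ε⟩ := (((eventually_forall_le_sub_payoff h p).and
    (eventually_all.2 fun j => Real.eventually_le_of_pos (p j - c j))).and
      self_mem_nhdsWithin).exists
  have hZ : ∀ i, indirectUtility h (shiftOn p Y (-ε)) i ≤
      indirectUtility h p i - if i ∈ N then -ε else 0 := by
    intro i
    refine indirectUtility_le fun o => ?_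
    have hnonneg := indirectUtility_nonneg h p i
    cases o with
    | none => split_ifs <;> simp only [payoff, Option.elim_none] <;> linarith
    | some j =>
      have hle := payoff_le_indirectUtility h p i (some j)
      rw [payoff_shiftOn_some]
      by_cases hjY : j ∈ Y
      · by_cases hiN : i ∈ N
        · simp only [if_pos hjY, if_pos hiN]
          linarith
        · have hij : ¬ Demands h p i (some j) := fun hij =>
            hiN (mem_filter.2 ⟨mem_univ i, j, hjY, hij⟩)
          simp only [if_pos hjY, if_neg hiN]
          linarith [hgap i (some j) hij]
      · simp only [if_neg hjY]
        split_ifs <;> linarith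
  have hshift := dualValue_shiftOn_le (c := c) Y N (-ε) hZ
  have hmin' := hmin (shiftOn p Y (-ε)) fun j => by
    by_cases hjY : j ∈ Y
    · simp only [shiftOn, if_pos hjY]
      linarith [hεY j (sub_pos.2 (hY j hjY))]
    · simp only [shiftOn, if_neg hjY, add_zero]
      exact hcp j
  have : (0 : ℝ) ≤ #N - #Y := (mul_nonneg_iff_of_pos_left hε).1 (by linarith)
  exact_mod_cast sub_nonneg.1 this

theorem exists_isCompetitiveEquilibrium (h : B → S → ℝ) (c : S → ℝ) :
    ∃ μ p, IsCompetitiveEquilibrium h c μ p := by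
  obtain ⟨p, hcp, hmin⟩ := exists_forall_dualValue_le h c
  obtain ⟨μ₁, hμ₁, hcover₁⟩ := Matching.exists_isSome_of_hall (fun i j => Demands h p i (some j))
    (fun i => 0 < indirectUtility h p i) (card_le_card_demanded hmin hcp)
  obtain ⟨μ₂, hμ₂, hcover₂⟩ := Matching.exists_sellerMatched_of_hall
    (fun i j => Demands h p i (some j)) (fun j => c j < p j) (card_le_card_demanders hmin hcp)
  refine ⟨μ₁.merge μ₂, p, hcp, fun i => ?_, fun j hj => ?_⟩
  · cases hμ : (μ₁.merge μ₂).toFun i with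
    | some j =>
      rcases Matching.merge_apply_eq_or μ₁ μ₂ i with hi | hi <;> rw [hi] at hμ
      exacts [hμ₁ i j hμ, hμ₂ i j hμ]
    | none =>
      have hi : ¬ 0 < indirectUtility h p i := fun hi => by
        simpa [hμ] using Matching.isSome_merge (μ₂ := μ₂) (hcover₁ i hi)
      exact (le_antisymm (not_lt.1 hi) (indirectUtility_nonneg h p i)).symm
  · exact le_antisymm (not_lt.1 fun hj' => hj (Matching.sellerMatched_merge (hcover₂ j hj')))
      (hcp j)

end AssignmentGame

theorem exists_stable_allocation_general
    {B S : Type*} [Fintype B] [Fintype S]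
    (h : B → S → ℝ) (c : S → ℝ)
    (hc : ∀ j, 0 ≤ c j) :
    ∃ (μ : Matching B S) (p : S → ℝ),
      ValidPrices c μ p ∧ Stable h c μ p ∧ SW h c μ = OPT h c := by
  obtain ⟨μ, p, he⟩ := AssignmentGame.exists_isCompetitiveEquilibrium h c
  exact ⟨μ, p, he.validPrices hc, he.stable, he.SW_eq_OPT⟩

/-- Every assignment game admits a stable allocation, whose matching is optimal. -/
theorem exists_stable_allocation
    {B S : Type*} [Fintype B] [Fintype S]
    (h : B → S → ℝ) (c : S → ℝ)
    (hh : ∀ i j, 0 ≤ h i j) (hc : ∀ j, 0 ≤ c j)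
    (ha : ∀ i j, 0 ≤ gain h c i j) :
    ∃ (μ : Matching B S) (p : S → ℝ),
      ValidPrices c μ p ∧ Stable h c μ p ∧ SW h c μ = OPT h c :=
  exists_stable_allocation_general h c hc
end

section
/- For any allocation (μ, p) of an assignment game, the minimum stabilizing subsidy is equal to the subset instability SI(μ, p). -/
open Finset

variable {B S : Type*} [Fintype B] [Fintype S]

/-- The minimum stabilizing subsidy of an allocation: the least total utility
injection making the allocation stable. -/
noncomputable def minSubsidy (h : B → S → ℝ) (c : S → ℝ) (μ : Matching B S)
    (p : S → ℝ) : ℝ :=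
  sInf {x | ∃ (τ : B → ℝ) (η : S → ℝ),
    (∀ i, 0 ≤ τ i) ∧ (∀ j, 0 ≤ η j) ∧
    (∀ i, 0 ≤ buyerU h μ p i + τ i) ∧ (∀ j, 0 ≤ sellerU c p j + η j) ∧
    (∀ i j, gain h c i j ≤ buyerU h μ p i + τ i + (sellerU c p j + η j)) ∧
    x = (∑ i : B, τ i) + (∑ j : S, η j)}

/-! The inequality `SI ≤ minSubsidy` is weak LP duality: summing the stability constraints of a
subsidy along a matching inside a coalition bounds the coalition's instability by the total
subsidy. For the converse, a minimal subsidy is an optimal dual solution of an assignment problem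
with pair weights `a i j - u i - v j` and reservation values `(u i)⁻`, `(v j)⁻`; embedding it into a
square assignment problem on `B ⊕ S`, Egerváry's theorem yields a matching whose primal value
equals the dual optimum, and that value is the instability of the coalition formed by the matched
agents together with all agents of negative utility.

Egerváry's theorem is proved by minimising the convex function
`η ↦ ∑ i, maxⱼ (w i j - η j) + ∑ j, η j`. At a minimiser every set `A` of rows satisfies Hall's
condition in the graph of tight entries, since otherwise raising `η` slightly on the tight
neighbourhood of `A` would decrease the objective; a perfect matching of tight entries then
attains the dual value. -/

section Egervary

variable {T : Type*} [Fintype T] [Nonempty T] (w : T → T → ℝ)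

noncomputable def surplus (η : T → ℝ) (i : T) : ℝ :=
  univ.sup' univ_nonempty fun j => w i j - η j

noncomputable def dualValue (η : T → ℝ) : ℝ :=
  ∑ i, surplus w η i + ∑ j, η j

noncomputable def tight (η : T → ℝ) (i : T) : Finset T :=
  {j | w i j - η j = surplus w η i}

lemma sub_le_surplus (η : T → ℝ) (i j : T) : w i j - η j ≤ surplus w η i :=
  le_sup' (fun j => w i j - η j) (mem_univ j)

lemma surplus_sub_const (η : T → ℝ) (t : ℝ) (i : T) :
    surplus w (fun j => η j - t) i = surplus w η i + t := by
  rw [surplus, surplus, sup'_add]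
  exact sup'_congr _ rfl fun j _ => by ring

lemma dualValue_sub_const (η : T → ℝ) (t : ℝ) :
    dualValue w (fun j => η j - t) = dualValue w η := by
  simp only [dualValue, surplus_sub_const, sum_add_distrib, sum_sub_distrib, sum_const,
    card_univ, nsmul_eq_mul]
  ring

lemma continuous_dualValue : Continuous (dualValue w) := by
  unfold dualValue surplus
  fun_prop

lemma sum_sub_add_sum_le_dualValue (η : T → ℝ) (j₀ : T) :
    ∑ i, (w i j₀ - η j₀) + ∑ j, η j ≤ dualValue w η :=
  add_le_add_left (sum_le_sum fun i _ => sub_le_surplus w η i j₀) _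

/-- Since `dualValue` is invariant under shifts, it suffices to minimise over nonnegative
potentials vanishing somewhere, and on those it is coercive. -/
lemma exists_forall_dualValue_le : ∃ η₀, ∀ η, dualValue w η₀ ≤ dualValue w η := by
  set L := univ.inf' univ_nonempty fun j => ∑ i, w i j
  have coercive : ∀ η : T → ℝ, ∀ j₀, η j₀ = 0 → L + ∑ j, η j ≤ dualValue w η := by
    intro η j₀ hj₀
    have := sum_sub_add_sum_le_dualValue w η j₀
    simp only [hj₀, sub_zero] at this
    linarith [inf'_le (fun j => ∑ i, w i j) (mem_univ j₀)]
  set K := dualValue w 0 - L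
  set box : Set (T → ℝ) := Set.univ.pi fun _ => Set.Icc 0 K
  have zero_mem : (0 : T → ℝ) ∈ box := fun j _ => by
    obtain ⟨j₀⟩ := ‹Nonempty T›
    simpa [K] using coercive 0 j₀ rfl
  obtain ⟨η₀, -, hmin⟩ := (isCompact_univ_pi fun _ => isCompact_Icc).exists_isMinOn
    ⟨0, zero_mem⟩ (continuous_dualValue w).continuousOn
  refine ⟨η₀, fun η => ?_⟩
  obtain ⟨j₀, -, hj₀⟩ := exists_mem_eq_inf' univ_nonempty η
  set η' : T → ℝ := fun j => η j - η j₀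
  have hη' : ∀ j, 0 ≤ η' j := fun j => sub_nonneg.2 (hj₀ ▸ inf'_le η (mem_univ j))
  suffices dualValue w η₀ ≤ dualValue w η' by rwa [dualValue_sub_const] at this
  by_cases hbox : ∀ j, η' j ≤ K
  · exact hmin fun j _ => ⟨hη' j, hbox j⟩
  · obtain ⟨j₁, hj₁⟩ := not_forall.1 hbox
    have := coercive η' j₀ (sub_self _)
    have := single_le_sum (fun j _ => hη' j) (mem_univ j₁)
    linarith [isMinOn_iff.1 hmin 0 zero_mem]

lemma exists_pos_add_le_surplus (η : T → ℝ) :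
    ∃ ε > 0, ∀ i j, j ∉ tight w η i → w i j - η j + ε ≤ surplus w η i := by
  set gap : T × T → ℝ := fun q => surplus w η q.1 - (w q.1 q.2 - η q.2)
  refine ⟨univ.inf' univ_nonempty fun q => if 0 < gap q then gap q else 1, ?_, fun i j hj => ?_⟩
  · refine (lt_inf'_iff _).2 fun q _ => ?_
    split_ifs with h
    exacts [h, one_pos]
  · have hpos : 0 < gap (i, j) := sub_pos.2 <| (sub_le_surplus w η i j).lt_of_ne
      fun h => hj (by simp [tight, h])
    have := inf'_le (fun q => if 0 < gap q then gap q else 1) (mem_univ (i, j))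
    simp only [hpos, if_true, gap] at this
    linarith

/-- Raising the potentials of the tight neighbourhood `N` of `A` by a small `ε` lowers the
surplus of every row in `A` by `ε`, so minimality of `η₀` forces `#A ≤ #N`. -/
lemma card_le_card_biUnion_tight [DecidableEq T] {η₀ : T → ℝ}
    (hmin : ∀ η, dualValue w η₀ ≤ dualValue w η) (A : Finset T) :
    #A ≤ #(A.biUnion (tight w η₀)) := by
  set N := A.biUnion (tight w η₀)
  obtain ⟨ε, hε, hgap⟩ := exists_pos_add_le_surplus w η₀
  set η₁ : T → ℝ := fun j => η₀ j + if j ∈ N then ε else 0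
  have surplus_le : ∀ i, surplus w η₁ i ≤ surplus w η₀ i - if i ∈ A then ε else 0 := by
    intro i
    refine sup'_le _ _ fun j _ => ?_
    show w i j - (η₀ j + if j ∈ N then ε else 0) ≤ _
    have hA : (if i ∈ A then ε else 0) ≤ ε := by split_ifs <;> linarith
    have hN : 0 ≤ if j ∈ N then ε else 0 := by split_ifs <;> linarith
    by_cases hj : j ∈ tight w η₀ i
    · have : (if i ∈ A then ε else 0) ≤ if j ∈ N then ε else 0 := by
        split_ifs with hi hjN
        exacts [le_rfl, absurd (mem_biUnion.2 ⟨i, hi, hj⟩) hjN, hε.le, le_rfl]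
      linarith [sub_le_surplus w η₀ i j]
    · linarith [hgap i j hj]
  have h₁ : dualValue w η₁ ≤ dualValue w η₀ - ε * #A + ε * #N := by
    have := sum_le_sum fun i (_ : i ∈ univ) => surplus_le i
    simp only [dualValue, η₁, sum_sub_distrib, sum_add_distrib, sum_ite_mem, univ_inter,
      sum_const, nsmul_eq_mul] at this ⊢
    linarith
  have h₂ : ε * #A ≤ ε * #N := by linarith [hmin η₁]
  exact_mod_cast le_of_mul_le_mul_left h₂ hε

end Egervary

theorem exists_cover_sum_eq_perm_sum {T : Type*} [Fintype T] (w : T → T → ℝ) :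
    ∃ (τ η : T → ℝ) (σ : Equiv.Perm T),
      (∀ i j, w i j ≤ τ i + η j) ∧ ∑ i, τ i + ∑ j, η j = ∑ i, w i (σ i) := by
  classical
  cases isEmpty_or_nonempty T
  · exact ⟨0, 0, 1, fun i => isEmptyElim i, by simp⟩
  obtain ⟨η₀, hmin⟩ := exists_forall_dualValue_le w
  obtain ⟨f, hf, hft⟩ :=
    (all_card_le_biUnion_card_iff_exists_injective _).1 (card_le_card_biUnion_tight w hmin)
  set σ := Equiv.ofBijective f (Finite.injective_iff_bijective.1 hf)
  refine ⟨surplus w η₀, η₀, σ, fun i j => by linarith [sub_le_surplus w η₀ i j], ?_⟩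
  have tight_σ : ∀ i, w i (σ i) = surplus w η₀ i + η₀ (σ i) := fun i => by
    have := (mem_filter.1 (hft i)).2
    simp only [σ, Equiv.ofBijective_apply]
    linarith
  simp only [tight_σ, sum_add_distrib, Equiv.sum_comp σ η₀]

/-- In the square problem on `B ⊕ S`, a buyer assigned to a buyer stays unmatched and earns
`d i`, and a seller `j` assigned to a seller is left unmatched by the buyers and earns `e j`. -/
def augmentedWeight {B S : Type*} (d : B → ℝ) (e : S → ℝ) (w : B → S → ℝ) :
    B ⊕ S → B ⊕ S → ℝ :=
  Sum.elim (fun i => Sum.elim (fun _ => d i) (w i)) (fun _ => Sum.elim 0 e)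

def Matching.ofPerm {B S : Type*} (σ : Equiv.Perm (B ⊕ S)) : Matching B S where
  toFun i := (σ (.inl i)).getRight?
  inj _ _ _ hi hi' := Sum.inl_injective <| σ.injective <|
    (Sum.getRight?_eq_some_iff.1 hi).trans (Sum.getRight?_eq_some_iff.1 hi').symm

lemma sum_augmentedWeight_perm (d : B → ℝ) (e : S → ℝ) (w : B → S → ℝ) (σ : Equiv.Perm (B ⊕ S)) :
    ∑ x, augmentedWeight d e w x (σ x) =
      ∑ i, ((Matching.ofPerm σ).toFun i).elim (d i) (fun j => w i j - e j) + ∑ j, e j := by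
  set g : B ⊕ S → ℝ := Sum.elim 0 e
  have buyers (i : B) : augmentedWeight d e w (.inl i) (σ (.inl i)) =
      ((Matching.ofPerm σ).toFun i).elim (d i) (fun j => w i j - e j) + g (σ (.inl i)) := by
    change _ = (σ (.inl i)).getRight?.elim _ _ + _
    cases σ (.inl i) <;> simp [augmentedWeight, g]
  have sellers : ∑ j, augmentedWeight d e w (.inr j) (σ (.inr j)) =
      ∑ j, e j - ∑ i, g (σ (.inl i)) := by
    have := Equiv.sum_comp σ g
    simp only [Fintype.sum_sum_type, g, Sum.elim_inl, Pi.zero_apply, sum_const_zero, zero_add,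
      Sum.elim_inr] at this
    change ∑ j, g (σ (.inr j)) = _
    linarith
  rw [Fintype.sum_sum_type, sellers, sum_congr rfl fun i _ => buyers i, sum_add_distrib]
  ring

theorem exists_cover_le_matching (d : B → ℝ) (e : S → ℝ) (w : B → S → ℝ) :
    ∃ (τ : B → ℝ) (η : S → ℝ) (M : Matching B S),
      (∀ i, d i ≤ τ i) ∧ (∀ j, e j ≤ η j) ∧ (∀ i j, w i j ≤ τ i + η j) ∧
      ∑ i, τ i + ∑ j, η j ≤ ∑ i, (M.toFun i).elim (d i) (fun j => w i j - e j) + ∑ j, e j := by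
  obtain ⟨τ', η', σ, hcover, hsum⟩ := exists_cover_sum_eq_perm_sum (augmentedWeight d e w)
  set α := ⨅ i, η' (.inl i)
  set β := ⨅ j, τ' (.inr j)
  have hα : ∀ i, α ≤ η' (.inl i) := ciInf_le (Set.finite_range _).bddBelow
  have hβ : ∀ j, β ≤ τ' (.inr j) := ciInf_le (Set.finite_range _).bddBelow
  have α_eq (i : B) : ∃ i₀, η' (.inl i₀) = α := haveI : Nonempty B := ⟨i⟩; exists_eq_ciInf_of_finite
  have β_eq (j : S) : ∃ j₀, τ' (.inr j₀) = β := haveI : Nonempty S := ⟨j⟩; exists_eq_ciInf_of_finite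
  refine ⟨fun i => τ' (.inl i) + α, fun j => η' (.inr j) + β, Matching.ofPerm σ, fun i => ?_,
    fun j => ?_, fun i j => ?_, ?_⟩
  · obtain ⟨i₀, hi₀⟩ := α_eq i
    have : d i ≤ τ' (.inl i) + η' (.inl i₀) := hcover (.inl i) (.inl i₀)
    linarith
  · obtain ⟨j₀, hj₀⟩ := β_eq j
    have : e j ≤ τ' (.inr j₀) + η' (.inr j) := hcover (.inr j₀) (.inr j)
    linarith
  · obtain ⟨i₀, hi₀⟩ := α_eq i
    obtain ⟨j₀, hj₀⟩ := β_eq j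
    have : w i j ≤ τ' (.inl i) + η' (.inr j) := hcover (.inl i) (.inr j)
    have : 0 ≤ τ' (.inr j₀) + η' (.inl i₀) := hcover (.inr j₀) (.inl i₀)
    dsimp only
    linarith
  rw [← sum_augmentedWeight_perm, ← hsum]
  have := sum_le_sum fun i (_ : i ∈ univ) => hα i
  have := sum_le_sum fun j (_ : j ∈ univ) => hβ j
  simp only [Fintype.sum_sum_type, sum_add_distrib, sum_const, card_univ, nsmul_eq_mul] at *
  linarith

open Classical in
noncomputable def Matching.sellers {B S : Type*} [Fintype S] (μ : Matching B S) : Finset S :=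
  {j | SellerMatched μ j}

lemma Matching.sum_sellers {R : Type*} [AddCommMonoid R] (μ : Matching B S) (g : S → R) :
    ∑ j ∈ μ.sellers, g j = ∑ i, (μ.toFun i).elim 0 g := by
  classical
  have elim_eq : ∀ i, (μ.toFun i).elim 0 g = ∑ j, if μ.toFun i = some j then g j else 0 :=
    fun i => by cases μ.toFun i <;> simp
  rw [sum_congr rfl fun i _ => elim_eq i, sum_comm, Matching.sellers, sum_filter]
  refine sum_congr rfl fun j _ => ?_
  by_cases hj : SellerMatched μ j
  · obtain ⟨i₀, hi₀⟩ := hj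
    rw [if_pos ⟨i₀, hi₀⟩, sum_eq_single i₀ (fun i _ hi => if_neg fun h => hi (μ.inj _ _ _ h hi₀))
      (by simp), if_pos hi₀]
  · exact (if_neg hj).trans (sum_eq_zero fun i _ => if_neg fun h => hj ⟨i, h⟩).symm

def IsStabilizingSubsidy {B S : Type*} (h : B → S → ℝ) (c : S → ℝ) (u : B → ℝ) (v : S → ℝ)
    (τ : B → ℝ) (η : S → ℝ) : Prop :=
  (∀ i, 0 ≤ τ i) ∧ (∀ j, 0 ≤ η j) ∧ (∀ i, 0 ≤ u i + τ i) ∧ (∀ j, 0 ≤ v j + η j) ∧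
    ∀ i j, gain h c i j ≤ u i + τ i + (v j + η j)

noncomputable def minSubsidyGen (h : B → S → ℝ) (c : S → ℝ) (u : B → ℝ) (v : S → ℝ) : ℝ :=
  sInf {x | ∃ τ η, IsStabilizingSubsidy h c u v τ η ∧ x = ∑ i, τ i + ∑ j, η j}

lemma minSubsidy_eq_minSubsidyGen (h : B → S → ℝ) (c : S → ℝ) (μ : Matching B S) (p : S → ℝ) :
    minSubsidy h c μ p = minSubsidyGen h c (buyerU h μ p) (sellerU c p) := by
  simp only [minSubsidy, minSubsidyGen, IsStabilizingSubsidy, and_assoc]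

lemma SW_sub_sum_le_of_isStabilizingSubsidy {h : B → S → ℝ} {c : S → ℝ} {u : B → ℝ}
    {v : S → ℝ} {τ : B → ℝ} {η : S → ℝ}
    (hs : IsStabilizingSubsidy h c u v τ η) {B' : Finset B} {S' : Finset S} {μ : Matching B S}
    (hW : Within B' S' μ) :
    SW h c μ - (∑ i ∈ B', u i + ∑ j ∈ S', v j) ≤ ∑ i, τ i + ∑ j, η j := by
  classical
  obtain ⟨hτ, hη, hu, hv, hgain⟩ := hs
  have pointwise (i : B) : (μ.toFun i).elim 0 (gain h c i) ≤
      (if i ∈ B' then u i + τ i else 0) + (μ.toFun i).elim 0 (fun j => v j + η j) := by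
    cases hi : μ.toFun i with
    | none => split_ifs <;> simp [hu i]
    | some j => simpa [(hW i j hi).1, add_assoc] using hgain i j
  have sellers_sub : μ.sellers ⊆ S' := fun j hj => by
    obtain ⟨i, hi⟩ := (mem_filter.1 hj).2
    exact (hW i j hi).2
  have h₁ := sum_le_sum fun i (_ : i ∈ univ) => pointwise i
  rw [sum_add_distrib, sum_ite_mem, univ_inter, ← μ.sum_sellers] at h₁
  have h₂ := sum_le_sum_of_subset_of_nonneg sellers_sub fun j _ _ => hv j
  have h₃ := sum_le_sum_of_subset_of_nonneg (subset_univ B') fun i _ _ => hτ i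
  have h₄ := sum_le_sum_of_subset_of_nonneg (subset_univ S') fun j _ _ => hη j
  simp only [sum_add_distrib] at h₁ h₂
  change ∑ i, (μ.toFun i).elim 0 (gain h c i) - _ ≤ _
  linarith

/-- The coalition of all matched agents together with all agents of negative utility. -/
lemma exists_within_SW_sub_sum_eq (h : B → S → ℝ) (c : S → ℝ) (u : B → ℝ) (v : S → ℝ)
    (M : Matching B S) : ∃ B' S', Within B' S' M ∧
      SW h c M - (∑ i ∈ B', u i + ∑ j ∈ S', v j) =
        ∑ i, (M.toFun i).elim (max 0 (-u i)) (fun j => gain h c i j - u i - v j - max 0 (-v j))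
          + ∑ j, max 0 (-v j) := by
  classical
  refine ⟨({i | (M.toFun i).isSome ∨ u i < 0} : Finset B),
    ({j | j ∈ M.sellers ∨ v j < 0} : Finset S), fun i j hij => ⟨by simp [hij],
      mem_filter.2 ⟨mem_univ j, Or.inl (mem_filter.2 ⟨mem_univ j, i, hij⟩)⟩⟩, ?_⟩
  have buyers (i : B) : (if (M.toFun i).isSome ∨ u i < 0 then u i else 0) =
      (M.toFun i).elim (-max 0 (-u i)) (fun _ => u i) := by
    cases M.toFun i <;> rcases lt_or_ge (u i) 0 with hu | hu <;> simp [hu, le_of_lt]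
  have sellers (j : S) : (if j ∈ M.sellers ∨ v j < 0 then v j else 0) =
      (if j ∈ M.sellers then v j + max 0 (-v j) else 0) - max 0 (-v j) := by
    by_cases hj : j ∈ M.sellers <;> rcases lt_or_ge (v j) 0 with hv | hv <;>
      simp [hj, hv, le_of_lt]
  have combine (i : B) : (M.toFun i).elim 0 (gain h c i)
      - (M.toFun i).elim (-max 0 (-u i)) (fun _ => u i)
      - (M.toFun i).elim 0 (fun j => v j + max 0 (-v j)) =
        (M.toFun i).elim (max 0 (-u i)) (fun j => gain h c i j - u i - v j - max 0 (-v j)) := by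
    cases M.toFun i <;> simp only [Option.elim] <;> ring
  rw [sum_filter, sum_filter, sum_congr rfl fun i _ => buyers i,
    sum_congr rfl fun j _ => sellers j, sum_sub_distrib, sum_ite_mem, univ_inter, M.sum_sellers,
    ← sum_congr rfl fun i _ => combine i]
  simp only [sum_sub_distrib]
  change ∑ i, (M.toFun i).elim 0 (gain h c i) - _ = _
  ring

lemma exists_isStabilizingSubsidy_le_SW_sub_sum (h : B → S → ℝ) (c : S → ℝ) (u : B → ℝ)
    (v : S → ℝ) : ∃ τ η, IsStabilizingSubsidy h c u v τ η ∧ ∃ B' S' M, Within B' S' M ∧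
      ∑ i, τ i + ∑ j, η j ≤ SW h c M - (∑ i ∈ B', u i + ∑ j ∈ S', v j) := by
  obtain ⟨τ, η, M, hτ, hη, hcover, hle⟩ := exists_cover_le_matching (fun i => max 0 (-u i))
    (fun j => max 0 (-v j)) (fun i j => gain h c i j - u i - v j)
  obtain ⟨B', S', hW, hSW⟩ := exists_within_SW_sub_sum_eq h c u v M
  refine ⟨τ, η, ⟨fun i => (le_max_left _ _).trans (hτ i), fun j => (le_max_left _ _).trans (hη j),
    fun i => ?_, fun j => ?_, fun i j => ?_⟩, B', S', M, hW, hSW ▸ hle⟩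
  · linarith [le_max_right 0 (-u i), hτ i]
  · linarith [le_max_right 0 (-v j), hη j]
  · linarith [hcover i j]

theorem minSubsidyGen_eq_SIgen (h : B → S → ℝ) (c : S → ℝ) (u : B → ℝ) (v : S → ℝ) :
    minSubsidyGen h c u v = SIgen h c u v := by
  obtain ⟨τ, η, hs, B', S', M, hW, hle⟩ := exists_isStabilizingSubsidy_le_SW_sub_sum h c u v
  have heq := le_antisymm (SW_sub_sum_le_of_isStabilizingSubsidy hs hW) hle
  have least : IsLeast {x | ∃ τ η, IsStabilizingSubsidy h c u v τ η ∧ x = ∑ i, τ i + ∑ j, η j}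
      (∑ i, τ i + ∑ j, η j) :=
    ⟨⟨τ, η, hs, rfl⟩, by
      rintro _ ⟨τ', η', hs', rfl⟩
      exact heq ▸ SW_sub_sum_le_of_isStabilizingSubsidy hs' hW⟩
  have greatest : IsGreatest {x | ∃ B' S' μ', Within B' S' μ' ∧
      x = SW h c μ' - (∑ i ∈ B', u i + ∑ j ∈ S', v j)} (∑ i, τ i + ∑ j, η j) :=
    ⟨⟨B', S', M, hW, heq.symm⟩, by
      rintro _ ⟨B'', S'', μ'', hW'', rfl⟩
      exact SW_sub_sum_le_of_isStabilizingSubsidy hs hW''⟩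
  rw [minSubsidyGen, SIgen, least.csInf_eq, greatest.csSup_eq]

theorem minSubsidy_eq_SI_general
    {B S : Type*} [Fintype B] [Fintype S]
    (h : B → S → ℝ) (c : S → ℝ)
    (μ : Matching B S) (p : S → ℝ) :
    minSubsidy h c μ p = SI h c μ p := by
  rw [minSubsidy_eq_minSubsidyGen]
  exact minSubsidyGen_eq_SIgen h c _ _

/-- The minimum stabilizing subsidy equals the subset instability. -/
theorem minSubsidy_eq_SI
    {B S : Type*} [Fintype B] [Fintype S]
    (h : B → S → ℝ) (c : S → ℝ)
    (hh : ∀ i j, 0 ≤ h i j) (hc : ∀ j, 0 ≤ c j)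
    (ha : ∀ i j, 0 ≤ gain h c i j)
    (μ : Matching B S) (p : S → ℝ) (hp : ValidPrices c μ p) :
    minSubsidy h c μ p = SI h c μ p :=
  minSubsidy_eq_SI_general h c μ p
end

section
/- For any matching μ of an assignment game, the half-price allocation (μ, p^half) is individually rational and satisfies SI(μ, p^half) ≤ OPT − SW(μ)/2; equivalently, when OPT > 0, (1/2)·λ(μ) ≤ J(μ, p^half). -/
open Finset

variable {B S : Type*} [Fintype B] [Fintype S]

open Classical in
/-- The half price vector: `c j + a i j / 2` for a seller `j` matched to `i`, and `c j`
for unmatched sellers. -/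
noncomputable def halfPrice (h : B → S → ℝ) (c : S → ℝ) (μ : Matching B S) (j : S) : ℝ :=
  if hj : SellerMatched μ j then c j + gain h c hj.choose j / 2 else c j

/-! Under half prices every pair `(i, j)` of `μ` pays half of its gain `a i j` to `i` and half
to `j`. Given a sub-market `(B', S')` with a matching `μ'` inside it, patch `μ'` with the pairs
of `μ` that avoid both `B'` and `S'`. The patched matching has welfare at most `OPT`, and compared
with `μ'` plus `μ` it misses only pairs of `μ` meeting `B'` or `S'`, each of which pays at least
half of its gain to an agent of the sub-market. Hence
`SW μ' - ∑_{B'} u - ∑_{S'} v ≤ OPT - SW μ / 2`. -/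

section

open Classical

omit [Fintype B] [Fintype S]

namespace Matching

theorem toFun_injective : Function.Injective (toFun : Matching B S → B → Option S)
  | ⟨_, _⟩, ⟨_, _⟩, rfl => rfl

instance [Finite B] [Finite S] : Finite (Matching B S) :=
  Finite.of_injective _ toFun_injective

noncomputable def patch {B' : Finset B} {S' : Finset S} {μ' : Matching B S}
    (hW : Within B' S' μ') (μ : Matching B S) : Matching B S where
  toFun i := if i ∈ B' then μ'.toFun i else (μ.toFun i).filter (· ∉ S')
  inj i i' j hi hi' := by
    by_cases hiB : i ∈ B' <;> by_cases hi'B : i' ∈ B' <;>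
      simp only [hiB, hi'B, if_true, if_false, Option.filter_eq_some_iff,
        decide_eq_true_eq] at hi hi'
    · exact μ'.inj _ _ _ hi hi'
    · exact absurd (hW i j hi).2 hi'.2
    · exact absurd (hW i' j hi').2 hi.2
    · exact μ.inj _ _ _ hi.1 hi'.1

end Matching

def pairGain (h : B → S → ℝ) (c : S → ℝ) (μ : Matching B S) (i : B) : ℝ :=
  (μ.toFun i).elim 0 (gain h c i)

variable {h : B → S → ℝ} {c : S → ℝ} {μ : Matching B S}

theorem halfPrice_of_toFun_eq_some {i : B} {j : S} (hij : μ.toFun i = some j) :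
    halfPrice h c μ j = c j + gain h c i j / 2 := by
  have hj : SellerMatched μ j := ⟨i, hij⟩
  rw [halfPrice, dif_pos hj, μ.inj _ _ _ hj.choose_spec hij]

theorem halfPrice_of_not_sellerMatched {j : S} (hj : ¬SellerMatched μ j) :
    halfPrice h c μ j = c j := by
  rw [halfPrice, dif_neg hj]

theorem buyerU_halfPrice (i : B) : buyerU h μ (halfPrice h c μ) i = pairGain h c μ i / 2 := by
  cases hi : μ.toFun i with
  | none => simp [buyerU, pairGain, hi]
  | some j =>
    simp only [buyerU, pairGain, hi, Option.elim, halfPrice_of_toFun_eq_some hi, gain]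
    ring

theorem half_pairGain_add_pairGain_le (ha : ∀ i j, 0 ≤ gain h c i j) {B' : Finset B}
    {S' : Finset S} {μ' : Matching B S} (hW : Within B' S' μ') (i : B) :
    pairGain h c μ i / 2 + pairGain h c μ' i ≤
      pairGain h c (Matching.patch hW μ) i + (if i ∈ B' then pairGain h c μ i / 2 else 0) +
        (μ.toFun i).elim 0 (fun j => if j ∈ S' then gain h c i j / 2 else 0) := by
  by_cases hiB : i ∈ B'
  · have hshare : 0 ≤ (μ.toFun i).elim 0 (fun j => if j ∈ S' then gain h c i j / 2 else 0) := by
      cases μ.toFun i with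
      | none => exact le_rfl
      | some j => dsimp only [Option.elim]; split_ifs <;> linarith [ha i j]
    simp only [pairGain, Matching.patch, if_pos hiB]
    linarith
  · have hμ' : μ'.toFun i = none :=
      Option.eq_none_iff_forall_ne_some.2 fun j hj => hiB (hW i j hj).1
    cases hμi : μ.toFun i with
    | none => simp [pairGain, Matching.patch, hiB, hμ', hμi]
    | some j =>
      by_cases hjS : j ∈ S'
      · simp [pairGain, Matching.patch, hiB, hμ', hμi, hjS, Option.filter_some]
      · simpa [pairGain, Matching.patch, hiB, hμ', hμi, hjS, Option.filter_some] using ha i j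

end

theorem SW_le_OPT (h : B → S → ℝ) (c : S → ℝ) (μ : Matching B S) : SW h c μ ≤ OPT h c :=
  le_csSup (Set.finite_range _).bddAbove ⟨μ, rfl⟩

section

open Classical

omit [Fintype S]

variable {h : B → S → ℝ} {c : S → ℝ} {μ : Matching B S}

theorem sellerU_halfPrice (j : S) :
    sellerU c (halfPrice h c μ) j = ∑ i, if μ.toFun i = some j then gain h c i j / 2 else 0 := by
  by_cases hj : SellerMatched μ j
  · obtain ⟨i, hi⟩ := hj
    rw [Finset.sum_eq_single_of_mem i (Finset.mem_univ i)
      (fun i' _ hi' => if_neg fun hi'j => hi' (μ.inj _ _ _ hi'j hi)), if_pos hi,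
      sellerU, halfPrice_of_toFun_eq_some hi]
    ring
  · rw [Finset.sum_eq_zero (fun i _ => if_neg fun hij => hj ⟨i, hij⟩), sellerU,
      halfPrice_of_not_sellerMatched hj, sub_self]

theorem sum_sellerU_halfPrice (S' : Finset S) :
    ∑ j ∈ S', sellerU c (halfPrice h c μ) j =
      ∑ i, (μ.toFun i).elim 0 (fun j => if j ∈ S' then gain h c i j / 2 else 0) := by
  simp_rw [sellerU_halfPrice]
  rw [Finset.sum_comm]
  refine Finset.sum_congr rfl fun i _ => ?_
  cases μ.toFun i with
  | none => simp
  | some j => simp [Finset.sum_ite_eq]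

theorem indivRational_halfPrice (ha : ∀ i j, 0 ≤ gain h c i j) :
    IndivRational h c μ (halfPrice h c μ) := by
  refine ⟨fun i => ?_, fun j => ?_⟩
  · rw [buyerU_halfPrice, pairGain]
    cases μ.toFun i with
    | none => simp
    | some j => simpa using div_nonneg (ha i j) zero_le_two
  · rw [sellerU_halfPrice]
    exact Finset.sum_nonneg fun i _ => by split <;> linarith [ha i j]

theorem half_SW_add_SW_le (ha : ∀ i j, 0 ≤ gain h c i j) {B' : Finset B} {S' : Finset S}
    {μ' : Matching B S} (hW : Within B' S' μ') :
    SW h c μ / 2 + SW h c μ' ≤ SW h c (Matching.patch hW μ) +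
      ((∑ i ∈ B', buyerU h μ (halfPrice h c μ) i) + ∑ j ∈ S', sellerU c (halfPrice h c μ) j) := by
  have hbuyers : ∑ i ∈ B', buyerU h μ (halfPrice h c μ) i =
      ∑ i, if i ∈ B' then pairGain h c μ i / 2 else 0 := by
    rw [Finset.sum_ite_mem, Finset.univ_inter]
    simp_rw [buyerU_halfPrice]
  rw [hbuyers, sum_sellerU_halfPrice, ← add_assoc]
  simp only [SW, Finset.sum_div, ← Finset.sum_add_distrib]
  exact Finset.sum_le_sum fun i _ => half_pairGain_add_pairGain_le ha hW i

end

theorem SI_halfPrice_le {h : B → S → ℝ} {c : S → ℝ} {μ : Matching B S}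
    (ha : ∀ i j, 0 ≤ gain h c i j) :
    SI h c μ (halfPrice h c μ) ≤ OPT h c - SW h c μ / 2 := by
  refine csSup_le ⟨_, ∅, ∅, ⟨fun _ => none, by simp⟩, by simp [Within], rfl⟩ ?_
  rintro _ ⟨B', S', μ', hW, rfl⟩
  linarith [half_SW_add_SW_le ha (μ := μ) hW, SW_le_OPT h c (Matching.patch hW μ)]

theorem half_prices_half_stable_general
    {B S : Type*} [Fintype B] [Fintype S]
    (h : B → S → ℝ) (c : S → ℝ)
    (ha : ∀ i j, 0 ≤ gain h c i j)
    (μ : Matching B S) :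
    IndivRational h c μ (halfPrice h c μ) ∧
      SI h c μ (halfPrice h c μ) ≤ OPT h c - SW h c μ / 2 ∧
      (0 < OPT h c →
        (1 / 2) * (SW h c μ / OPT h c) ≤ 1 - SI h c μ (halfPrice h c μ) / OPT h c) := by
  have hSI := SI_halfPrice_le ha (μ := μ)
  refine ⟨indivRational_halfPrice ha, hSI, fun hOPT => ?_⟩
  calc (1 / 2) * (SW h c μ / OPT h c) = (SW h c μ / 2) / OPT h c := by ring
    _ ≤ (OPT h c - SI h c μ (halfPrice h c μ)) / OPT h c := by gcongr; linarith
    _ = 1 - SI h c μ (halfPrice h c μ) / OPT h c := by rw [sub_div, div_self hOPT.ne']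

/-- The half-price allocation is individually rational and achieves at least half
of the optimal stability index. -/
theorem half_prices_half_stable
    {B S : Type*} [Fintype B] [Fintype S]
    (h : B → S → ℝ) (c : S → ℝ)
    (hh : ∀ i j, 0 ≤ h i j) (hc : ∀ j, 0 ≤ c j)
    (ha : ∀ i j, 0 ≤ gain h c i j)
    (μ : Matching B S) :
    IndivRational h c μ (halfPrice h c μ) ∧
      SI h c μ (halfPrice h c μ) ≤ OPT h c - SW h c μ / 2 ∧
      (0 < OPT h c →
        (1 / 2) * (SW h c μ / OPT h c) ≤ 1 - SI h c μ (halfPrice h c μ) / OPT h c) :=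
  half_prices_half_stable_general h c ha μ
end

section
/- For every κ ∈ [0,1), there exists an assignment game with OPT > 0 and an allocation (μ, p) of this game such that OPT − SW(μ) ≤ SI(μ, p) ≤ (1 − κ)·OPT (so that, in particular, κ ≤ J(μ,p) ≤ λ(μ)), while for no constant κ' ∈ (0, 1] the allocation (μ, p) is in the κ'-approximate core. (A witness is the game with B = {a, b}, S = {α, β}, generated utilities a(a,α) = κ, a(b,β) = 1 − κ and 0 for the other two pairs, where μ matches only a with α at a price equal to the seller's valuation.) -/
open Finset

variable {B S : Type*} [Fintype B] [Fintype S]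

/-- Membership in the κ-approximate core. -/
def ApproxCore (h : B → S → ℝ) (c : S → ℝ) (μ : Matching B S) (p : S → ℝ) (κ : ℝ) : Prop :=
  (∀ i, 0 ≤ buyerU h μ p i) ∧ (∀ j, 0 ≤ sellerU c p j) ∧
  ∀ i j, κ * gain h c i j ≤ buyerU h μ p i + sellerU c p j

/-!
With zero seller valuations and zero prices the buyers keep all the generated utility. In the
game with diagonal gains `κ` and `1 - κ`, matching only `a` with `α` leaves the pair `(b, β)`
with nothing: as a coalition it recovers `1 - κ = OPT - SW μ`, and no coalition recovers more,
because `a` already holds its whole gain `κ`. The same pair blocks every `κ'`-approximate core.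
-/

namespace Matching

variable [DecidableEq B]

def single (i : B) (j : S) : Matching B S where
  toFun i' := if i' = i then some j else none
  inj a b k ha hb := by
    split_ifs at ha hb with hai hbi
    exact hai.trans hbi.symm

def ofInjective (f : B → S) (hf : Function.Injective f) : Matching B S where
  toFun i := some (f i)
  inj _ _ _ ha hb := hf (Option.some.inj (ha.trans hb.symm))

end Matching

section General

omit [Fintype S]

variable (h : B → S → ℝ) (c : S → ℝ)

theorem SW_single [DecidableEq B] (i : B) (j : S) :
    SW h c (Matching.single i j) = gain h c i j := by
  rw [SW, Finset.sum_eq_single i] <;> simp_all [Matching.single]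

theorem SW_ofInjective (f : B → S) (hf : Function.Injective f) :
    SW h c (Matching.ofInjective f hf) = ∑ i, gain h c i (f i) := by
  simp [SW, Matching.ofInjective]

theorem SW_le_sum_of_within {w : B → ℝ} (hw0 : ∀ i, 0 ≤ w i)
    (hw : ∀ i j, gain h c i j ≤ w i) {B' : Finset B} {S' : Finset S} {μ : Matching B S}
    (hμ : Within B' S' μ) : SW h c μ ≤ ∑ i ∈ B', w i := by
  classical
  have hout : ∀ i ∉ B', (μ.toFun i).elim 0 (gain h c i) = 0 := by
    intro i hi
    cases hμi : μ.toFun i with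
    | none => rfl
    | some j => exact absurd (hμ i j hμi).1 hi
  calc SW h c μ = ∑ i ∈ B', (μ.toFun i).elim 0 (gain h c i) :=
        (Finset.sum_subset (Finset.subset_univ B') fun i _ hi => hout i hi).symm
    _ ≤ ∑ i ∈ B', w i := by
        refine Finset.sum_le_sum fun i _ => ?_
        cases μ.toFun i with
        | none => exact hw0 i
        | some j => exact hw i j

theorem OPT_eq_sum_of_injective [Fintype S] (f : B → S) (hf : Function.Injective f)
    (hnn : ∀ i, 0 ≤ gain h c i (f i)) (hmax : ∀ i j, gain h c i j ≤ gain h c i (f i)) :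
    OPT h c = ∑ i, gain h c i (f i) := by
  refine IsGreatest.csSup_eq ⟨⟨_, SW_ofInjective h c f hf⟩, ?_⟩
  rintro _ ⟨μ, rfl⟩
  exact SW_le_sum_of_within h c hnn hmax (B' := Finset.univ) (S' := Finset.univ)
    fun _ _ _ => ⟨Finset.mem_univ _, Finset.mem_univ _⟩

theorem coalition_surplus_le_sum_posPart {u : B → ℝ} {v : S → ℝ} {w : B → ℝ}
    (hv : ∀ j, 0 ≤ v j) (hw0 : ∀ i, 0 ≤ w i) (hw : ∀ i j, gain h c i j ≤ w i)
    {B' : Finset B} {S' : Finset S} {μ : Matching B S} (hμ : Within B' S' μ) :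
    SW h c μ - ((∑ i ∈ B', u i) + (∑ j ∈ S', v j)) ≤ ∑ i, (w i - u i)⁺ := by
  have hSW := SW_le_sum_of_within h c hw0 hw hμ
  have hS' : 0 ≤ ∑ j ∈ S', v j := Finset.sum_nonneg fun j _ => hv j
  calc SW h c μ - ((∑ i ∈ B', u i) + (∑ j ∈ S', v j)) ≤ ∑ i ∈ B', (w i - u i) := by
        rw [Finset.sum_sub_distrib]; linarith
    _ ≤ ∑ i ∈ B', (w i - u i)⁺ := Finset.sum_le_sum fun i _ => le_posPart _
    _ ≤ ∑ i, (w i - u i)⁺ :=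
        Finset.sum_le_sum_of_subset_of_nonneg (Finset.subset_univ _)
          fun i _ _ => posPart_nonneg _

theorem SIgen_le_sum_posPart {u : B → ℝ} {v : S → ℝ} {w : B → ℝ}
    (hv : ∀ j, 0 ≤ v j) (hw0 : ∀ i, 0 ≤ w i) (hw : ∀ i j, gain h c i j ≤ w i) :
    SIgen h c u v ≤ ∑ i, (w i - u i)⁺ := by
  refine csSup_le
    ⟨_, ∅, ∅, { toFun := fun _ => none, inj := by simp }, by simp [Within], rfl⟩ ?_
  rintro _ ⟨B', S', μ, hμ, rfl⟩
  exact coalition_surplus_le_sum_posPart h c hv hw0 hw hμ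

theorem le_SIgen {u : B → ℝ} {v : S → ℝ} {w : B → ℝ}
    (hv : ∀ j, 0 ≤ v j) (hw0 : ∀ i, 0 ≤ w i) (hw : ∀ i j, gain h c i j ≤ w i)
    {B' : Finset B} {S' : Finset S} {μ : Matching B S} (hμ : Within B' S' μ) :
    SW h c μ - ((∑ i ∈ B', u i) + (∑ j ∈ S', v j)) ≤ SIgen h c u v := by
  refine le_csSup ⟨∑ i, (w i - u i)⁺, ?_⟩ ⟨B', S', μ, hμ, rfl⟩
  rintro _ ⟨B'', S'', μ', hμ', rfl⟩
  exact coalition_surplus_le_sum_posPart h c hv hw0 hw hμ'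

end General

section Utilities

omit [Fintype B] [Fintype S]

variable (h : B → S → ℝ) (c : S → ℝ)

@[simp]
theorem gain_zero_right (i : B) (j : S) : gain h 0 i j = h i j := by
  simp [gain]

theorem buyerU_single [DecidableEq B] (p : S → ℝ) (i i' : B) (j : S) :
    buyerU h (Matching.single i j) p i' = if i' = i then h i j - p j else 0 := by
  by_cases hi : i' = i <;> simp [buyerU, Matching.single, hi]

theorem not_approxCore_of_blocking_pair {μ : Matching B S} {p : S → ℝ} {κ : ℝ}
    (hκ : 0 < κ) {i : B} {j : S} (hgain : 0 < gain h c i j)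
    (hshare : buyerU h μ p i + sellerU c p j ≤ 0) :
    ¬ ApproxCore h c μ p κ := fun hcore => by
  have := hcore.2.2 i j
  nlinarith

end Utilities

/-- Buyers `a, b` and sellers `α, β` are `0, 1 : Fin 2`; the seller valuations will be zero,
so these buyer valuations are also the generated utilities. -/
def diagonalGame (κ : ℝ) : Fin 2 → Fin 2 → ℝ := ![![κ, 0], ![0, 1 - κ]]

section DiagonalGame

variable {κ : ℝ}

theorem diagonalGame_nonneg (hκ0 : 0 ≤ κ) (hκ1 : κ ≤ 1) (i j : Fin 2) :
    0 ≤ diagonalGame κ i j := by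
  fin_cases i <;> fin_cases j <;> simp [diagonalGame] <;> linarith

theorem diagonalGame_le_diag (hκ0 : 0 ≤ κ) (hκ1 : κ ≤ 1) (i j : Fin 2) :
    diagonalGame κ i j ≤ diagonalGame κ i i := by
  fin_cases i <;> fin_cases j <;> simp [diagonalGame] <;> linarith

theorem OPT_diagonalGame (hκ0 : 0 ≤ κ) (hκ1 : κ ≤ 1) : OPT (diagonalGame κ) 0 = 1 := by
  rw [OPT_eq_sum_of_injective _ _ id Function.injective_id]
  · simp [diagonalGame]
  · simpa only [gain_zero_right, id] using fun i => diagonalGame_nonneg hκ0 hκ1 i i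
  · simpa only [gain_zero_right, id] using diagonalGame_le_diag hκ0 hκ1

theorem SI_diagonalGame (hκ0 : 0 ≤ κ) (hκ1 : κ ≤ 1) :
    SI (diagonalGame κ) 0 (Matching.single 0 0) 0 = 1 - κ := by
  have hu : buyerU (diagonalGame κ) (Matching.single 0 0) 0 = ![κ, 0] := by
    ext i; fin_cases i <;> simp [buyerU_single, diagonalGame]
  have hv : sellerU (0 : Fin 2 → ℝ) 0 = 0 := by
    ext j; simp [sellerU]
  have hw0 : ∀ i, 0 ≤ gain (diagonalGame κ) 0 i i := by
    simpa only [gain_zero_right] using fun i => diagonalGame_nonneg hκ0 hκ1 i i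
  have hw : ∀ i j, gain (diagonalGame κ) 0 i j ≤ gain (diagonalGame κ) 0 i i := by
    simpa only [gain_zero_right] using diagonalGame_le_diag hκ0 hκ1
  rw [SI, hu, hv]
  apply le_antisymm
  · calc SIgen (diagonalGame κ) 0 ![κ, 0] 0
          ≤ ∑ i, (gain (diagonalGame κ) 0 i i - ![κ, 0] i)⁺ :=
            SIgen_le_sum_posPart _ _ (fun _ => le_rfl) hw0 hw
      _ = 1 - κ := by simp [Fin.sum_univ_two, diagonalGame, hκ1]
  · calc 1 - κ = SW (diagonalGame κ) 0 (Matching.single 1 1) -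
            ((∑ i ∈ {1}, ![κ, 0] i) + (∑ j ∈ {1}, (0 : Fin 2 → ℝ) j)) := by
          simp [SW_single, diagonalGame]
      _ ≤ _ := le_SIgen _ _ (fun _ => le_rfl) hw0 hw (by simp [Within, Matching.single])

end DiagonalGame

/-- For every `κ ∈ [0,1)` there is an assignment game (on two buyers and two
sellers) with `OPT > 0` and an allocation whose subset instability lies between
the optimality gap and `(1 - κ) · OPT`, yet which belongs to no κ'-approximate
core for any `κ' ∈ (0, 1]`. -/
theorem exists_stable_index_without_approx_core
    (κ : ℝ) (hκ0 : 0 ≤ κ) (hκ1 : κ < 1) :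
    ∃ (h : Fin 2 → Fin 2 → ℝ) (c : Fin 2 → ℝ) (μ : Matching (Fin 2) (Fin 2))
      (p : Fin 2 → ℝ),
      (∀ i j, 0 ≤ h i j) ∧ (∀ j, 0 ≤ c j) ∧ (∀ i j, 0 ≤ gain h c i j) ∧
      ValidPrices c μ p ∧
      0 < OPT h c ∧
      OPT h c - SW h c μ ≤ SI h c μ p ∧
      SI h c μ p ≤ (1 - κ) * OPT h c ∧
      (∀ κ' : ℝ, 0 < κ' → κ' ≤ 1 → ¬ ApproxCore h c μ p κ') := by
  have hOPT := OPT_diagonalGame hκ0 hκ1.le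
  have hSI := SI_diagonalGame hκ0 hκ1.le
  have hSW : SW (diagonalGame κ) 0 (Matching.single 0 0) = κ := by
    simp [SW_single, diagonalGame]
  refine ⟨diagonalGame κ, 0, Matching.single 0 0, 0, diagonalGame_nonneg hκ0 hκ1.le,
    fun _ => le_rfl, ?_, ⟨fun _ => le_rfl, fun _ _ => rfl⟩, ?_, ?_, ?_, ?_⟩
  · simpa only [gain_zero_right] using diagonalGame_nonneg hκ0 hκ1.le
  · rw [hOPT]; exact one_pos
  · rw [hOPT, hSW, hSI]
  · rw [hOPT, hSI, mul_one]
  · intro κ' hκ' _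
    refine not_approxCore_of_blocking_pair _ _ hκ' (i := 1) (j := 1) ?_ ?_
    · simp [diagonalGame, hκ1]
    · simp [buyerU_single, sellerU]
end

section
/- Let (μ, p) be an allocation of an assignment game such that a(i, μ(i)) ≥ 0 for every matched pair (i, μ(i)). Then there exists a nonnegative price vector p' : S → ℝ such that (μ, p') is individually rational and SI(μ, p') ≤ SI(μ, p). -/
open Finset

variable {B S : Type*} [Fintype B] [Fintype S]

/-!
Clamp each matched seller's price into `[c j, h i j]`, where `i` is the partner; this is possible
because `a(i, j) ≥ 0`, and it makes the allocation individually rational. Given a sub-market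
`(B', S', μ')` for the clamped prices, add to it every agent whose partner is already in it and
whose utility under the old prices is negative. Pair by pair, the old utilities of the enlarged
sub-market sum to at most the new utilities of the original one, so the enlarged sub-market
witnesses at least the same instability for the old prices.
-/

namespace Matching

theorem sum_elim_eq_sum (μ : Matching B S) {f : S → ℝ}
    (hf : ∀ j, ¬SellerMatched μ j → f j = 0) :
    ∑ i, (μ.toFun i).elim 0 f = ∑ j, f j := by
  classical
  have hrow : ∀ i, (μ.toFun i).elim 0 f = ∑ j, if μ.toFun i = some j then f j else 0 := by
    intro i
    cases μ.toFun i <;> simp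
  have hcol : ∀ j, (∑ i, if μ.toFun i = some j then f j else 0) = f j := by
    intro j
    by_cases hj : SellerMatched μ j
    · obtain ⟨i₀, hi₀⟩ := hj
      rw [sum_eq_single i₀ (fun i _ hi => if_neg fun hij => hi (μ.inj _ _ _ hij hi₀))
        (by simp), if_pos hi₀]
    · simp [hf j hj]
  rw [sum_congr rfl fun i _ => hrow i, sum_comm, sum_congr rfl fun j _ => hcol j]

theorem sum_add_sum_eq_sum_pairs [DecidableEq B] [DecidableEq S] (μ : Matching B S)
    (u : B → ℝ) {v : S → ℝ} (hv : ∀ j, ¬SellerMatched μ j → v j = 0)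
    (B' : Finset B) (S' : Finset S) :
    ∑ i ∈ B', u i + ∑ j ∈ S', v j =
      ∑ i, ((if i ∈ B' then u i else 0) +
        (μ.toFun i).elim 0 fun j => if j ∈ S' then v j else 0) := by
  rw [sum_add_distrib, sum_elim_eq_sum μ fun j hj => by simp [hv j hj], sum_ite_mem,
    sum_ite_mem, univ_inter, univ_inter]

end Matching

theorem Within.mono {B S : Type*} {B' B'' : Finset B} {S' S'' : Finset S} {μ' : Matching B S}
    (hw : Within B' S' μ') (hB : B' ⊆ B'') (hS : S' ⊆ S'') : Within B'' S'' μ' :=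
  fun i j hij => ⟨hB (hw i j hij).1, hS (hw i j hij).2⟩

theorem nonempty_SIgen_set {B S : Type*} [Fintype B] (h : B → S → ℝ) (c : S → ℝ) (u : B → ℝ)
    (v : S → ℝ) :
    {x | ∃ (B' : Finset B) (S' : Finset S) (μ' : Matching B S),
      Within B' S' μ' ∧ x = SW h c μ' - ((∑ i ∈ B', u i) + (∑ j ∈ S', v j))}.Nonempty :=
  ⟨_, ∅, ∅, ⟨fun _ => none, fun _ _ _ hi => (Option.some_ne_none _ hi.symm).elim⟩,
    fun _ _ hij => (Option.some_ne_none _ hij.symm).elim, rfl⟩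

section SIgen

variable (h : B → S → ℝ) (c : S → ℝ) (u : B → ℝ) (v : S → ℝ)

theorem bddAbove_SIgen_set :
    BddAbove {x | ∃ (B' : Finset B) (S' : Finset S) (μ' : Matching B S),
      Within B' S' μ' ∧ x = SW h c μ' - ((∑ i ∈ B', u i) + (∑ j ∈ S', v j))} := by
  have : Finite (Matching B S) :=
    .of_injective Matching.toFun fun μ ν hμν => by cases μ; cases ν; congr
  refine ((Set.finite_range fun t : Finset B × Finset S × Matching B S =>
    SW h c t.2.2 - ((∑ i ∈ t.1, u i) + (∑ j ∈ t.2.1, v j))).subset ?_).bddAbove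
  rintro x ⟨B', S', μ', -, rfl⟩
  exact ⟨(B', S', μ'), rfl⟩

variable {h c u v}

theorem SIgen_le_SIgen {u' : B → ℝ} {v' : S → ℝ}
    (H : ∀ (B' : Finset B) (S' : Finset S), ∃ B'' ⊇ B', ∃ S'' ⊇ S',
      ∑ i ∈ B'', u i + ∑ j ∈ S'', v j ≤ ∑ i ∈ B', u' i + ∑ j ∈ S', v' j) :
    SIgen h c u' v' ≤ SIgen h c u v := by
  refine csSup_le (nonempty_SIgen_set h c u' v') ?_
  rintro x ⟨B', S', μ', hw, rfl⟩
  obtain ⟨B'', hB, S'', hS, hle⟩ := H B' S'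
  exact (sub_le_sub_left hle _).trans
    (le_csSup (bddAbove_SIgen_set h c u v) ⟨B'', S'', μ', hw.mono hB hS, rfl⟩)

end SIgen

-- `x`, `y`: buyer and seller lie in the sub-market; each joins the enlarged one also when
-- its partner lies in the sub-market and its own utility is negative.
theorem pair_utilities_le_clamped {h c p : ℝ} (hch : c ≤ h) (x y : Prop) [Decidable x]
    [Decidable y] :
    (if x ∨ y ∧ h < p then h - p else 0) + (if y ∨ x ∧ p < c then p - c else 0) ≤
      (if x then h - max c (min p h) else 0) + (if y then max c (min p h) - c else 0) := by
  split_ifs <;> grind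

section Clamp

variable {B S : Type*} (h : B → S → ℝ) (c : S → ℝ) (μ : Matching B S) (p : S → ℝ)

open scoped Classical in
noncomputable def clampedPrices (j : S) : ℝ :=
  if hj : SellerMatched μ j then max (c j) (min (p j) (h hj.choose j)) else c j

variable {h c μ p}

theorem clampedPrices_of_eq_some {i : B} {j : S} (hij : μ.toFun i = some j) :
    clampedPrices h c μ p j = max (c j) (min (p j) (h i j)) := by
  have hj : SellerMatched μ j := ⟨i, hij⟩
  rw [clampedPrices, dif_pos hj, μ.inj _ _ j hj.choose_spec hij]

theorem clampedPrices_of_not_sellerMatched {j : S} (hj : ¬SellerMatched μ j) :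
    clampedPrices h c μ p j = c j :=
  dif_neg hj

theorem le_clampedPrices (j : S) : c j ≤ clampedPrices h c μ p j := by
  unfold clampedPrices
  split_ifs
  exacts [le_max_left _ _, le_rfl]

theorem validPrices_clampedPrices (hc : ∀ j, 0 ≤ c j) :
    ValidPrices c μ (clampedPrices h c μ p) :=
  ⟨fun j => (hc j).trans (le_clampedPrices j), fun _ => clampedPrices_of_not_sellerMatched⟩

theorem indivRational_clampedPrices (hcle : ∀ i j, μ.toFun i = some j → c j ≤ h i j) :
    IndivRational h c μ (clampedPrices h c μ p) := by
  refine ⟨fun i => ?_, fun j => sub_nonneg.2 (le_clampedPrices j)⟩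
  cases hi : μ.toFun i with
  | none => simp [buyerU, hi]
  | some j =>
    simp only [buyerU, hi, Option.elim, clampedPrices_of_eq_some hi, sub_nonneg]
    exact max_le (hcle i j hi) (min_le_right _ _)

end Clamp

open scoped Classical in
theorem sum_utilities_le_clampedPrices {h : B → S → ℝ} {c : S → ℝ} {μ : Matching B S}
    {p : S → ℝ} (hcle : ∀ i j, μ.toFun i = some j → c j ≤ h i j)
    (hp : ∀ j, ¬SellerMatched μ j → p j = c j) (B' : Finset B) (S' : Finset S) :
    ∑ i ∈ B' ∪ ({i | ∃ j ∈ S', μ.toFun i = some j ∧ h i j < p j} : Finset B), buyerU h μ p i +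
        ∑ j ∈ S' ∪ ({j | ∃ i ∈ B', μ.toFun i = some j ∧ p j < c j} : Finset S), sellerU c p j ≤
      ∑ i ∈ B', buyerU h μ (clampedPrices h c μ p) i +
        ∑ j ∈ S', sellerU c (clampedPrices h c μ p) j := by
  rw [μ.sum_add_sum_eq_sum_pairs _ (v := sellerU c p) fun j hj => sub_eq_zero.2 (hp j hj),
    μ.sum_add_sum_eq_sum_pairs _ (v := sellerU c (clampedPrices h c μ p)) fun j hj =>
      sub_eq_zero.2 (clampedPrices_of_not_sellerMatched hj)]
  refine sum_le_sum fun i _ => ?_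
  cases hi : μ.toFun i with
  | none => simp [buyerU, hi]
  | some j =>
    have hS : (∃ i' ∈ B', μ.toFun i' = some j ∧ p j < c j) ↔ i ∈ B' ∧ p j < c j :=
      ⟨fun ⟨i', hi', hij', hpc⟩ => μ.inj _ _ j hij' hi ▸ ⟨hi', hpc⟩,
        fun ⟨hi', hpc⟩ => ⟨i, hi', hi, hpc⟩⟩
    simpa [buyerU, sellerU, hi, hS, clampedPrices_of_eq_some hi] using
      pair_utilities_le_clamped (hcle i j hi) (i ∈ B') (j ∈ S')

theorem exists_IR_prices_SI_le_general
    {B S : Type*} [Fintype B] [Fintype S]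
    (h : B → S → ℝ) (c : S → ℝ)
    (hc : ∀ j, 0 ≤ c j)
    (μ : Matching B S)
    (hmatched : ∀ i j, μ.toFun i = some j → 0 ≤ gain h c i j)
    (p : S → ℝ) (hp : ValidPrices c μ p) :
    ∃ p' : S → ℝ, ValidPrices c μ p' ∧ IndivRational h c μ p' ∧
      SI h c μ p' ≤ SI h c μ p := by
  classical
  have hcle : ∀ i j, μ.toFun i = some j → c j ≤ h i j := fun i j hij =>
    sub_nonneg.1 (hmatched i j hij)
  refine ⟨clampedPrices h c μ p, validPrices_clampedPrices hc,
    indivRational_clampedPrices hcle, SIgen_le_SIgen fun B' S' => ?_⟩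
  exact ⟨_, subset_union_left, _, subset_union_left,
    sum_utilities_le_clampedPrices hcle hp.2 B' S'⟩

/-- Any allocation whose matched pairs generate nonnegative utility can be
re-priced into an individually rational allocation without increasing the
subset instability. -/
theorem exists_IR_prices_SI_le
    {B S : Type*} [Fintype B] [Fintype S]
    (h : B → S → ℝ) (c : S → ℝ)
    (hh : ∀ i j, 0 ≤ h i j) (hc : ∀ j, 0 ≤ c j)
    (μ : Matching B S)
    (hmatched : ∀ i j, μ.toFun i = some j → 0 ≤ gain h c i j)
    (p : S → ℝ) (hp : ValidPrices c μ p) :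
    ∃ p' : S → ℝ, ValidPrices c μ p' ∧ IndivRational h c μ p' ∧
      SI h c μ p' ≤ SI h c μ p :=
  exists_IR_prices_SI_le_general h c hc μ hmatched p hp
end
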